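/- arXiv:math/0401367 — 2 statements merged into one kernel-verified Lean document; each statement's English description precedes it below -/
import Mathlib

section
/- Let $V$ be a finite-dimensional vector space with subspaces $W_1 \subseteq \cdots \subseteq W_I \subseteq V$. Define $K \subseteq \bigoplus_{i=1}^I \mathrm{Hom}(W_i, V/W_i)$ as the kernel of the map $(\varphi_i)_i \mapsto (p_{i+1} \circ \varphi_i - \varphi_{i+1} \circ j_i)_{i=1}^{I-1}$, where $j_i : W_i \hookrightarrow W_{i+1}$ and $p_{i+1} : V/W_i \to V/W_{i+1}$. Let $G \subseteq \bigoplus_{i=1}^I \mathrm{Hom}(W_i, V)$ (with $W_{I+1} := V$) be the subspace of tuples $(\psi_i)_i$ such that $(\psi_i - \psi_{i+1} \circ j_i)(W_i) \subseteq W_{i+1}$ for $1 \le i \le I-1$. Then the map $\Psi : G \to K$, $(\psi_i)_i \mapsto (p_i \circ \psi_i)_i$, is a well-defined surjection with kernel $\bigoplus_{i=1}^I \mathrm{Hom}(W_i, W_i)$ (embedded via $\psi_i = $ maps landing in $W_i$), so $\dim K = \dim G - \sum_{i=1}^I (\dim W_i)^2$. -/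
/-!
Composing with the quotient maps gives a linear surjection
`Φ : ∏ᵢ Hom(Wᵢ, V) → ∏ᵢ Hom(Wᵢ, V/Wᵢ)` (each `V → V/Wᵢ` splits), and `G = Φ⁻¹(K)`: two vectors
have the same image in `V/W_{i+1}` exactly when their difference lies in `W_{i+1}`. So `Φ`
restricts to a surjection `Ψ : G → K` with kernel `ker Φ = ∏ᵢ Hom(Wᵢ, Wᵢ)`, and rank–nullity
gives the dimension count.
-/

/-- For a chain `W₁ ⊆ ⋯ ⊆ W_I ⊆ V = ℂⁿ`, the space `K` of tuples
`(φᵢ : Wᵢ → V/Wᵢ)ᵢ` satisfying `p_{i+1} ∘ φᵢ = φ_{i+1} ∘ jᵢ`. -/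
noncomputable def Kspace (n I : ℕ) (W : Fin I → Submodule ℂ (Fin n → ℂ)) (hW : Monotone W) :
    Submodule ℂ (∀ i : Fin I, (↥(W i) →ₗ[ℂ] ((Fin n → ℂ) ⧸ W i))) where
  carrier := {φ | ∀ (i : Fin I) (h : (i : ℕ) + 1 < I),
    (Submodule.mapQ (W i) (W ⟨(i : ℕ) + 1, h⟩) LinearMap.id
        (fun _ hx => hW (Fin.le_def.mpr (Nat.le_succ _)) hx)).comp (φ i) =
      (φ ⟨(i : ℕ) + 1, h⟩).comp
        (Submodule.inclusion (hW (Fin.le_def.mpr (Nat.le_succ _))))}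
  add_mem' := by
    intro a b ha hb i h
    simp only [Pi.add_apply, LinearMap.comp_add, LinearMap.add_comp, ha i h, hb i h]
  zero_mem' := by
    intro i h
    simp only [Pi.zero_apply, LinearMap.comp_zero, LinearMap.zero_comp]
  smul_mem' := by
    intro c f hf i h
    simp only [Pi.smul_apply, LinearMap.comp_smul, LinearMap.smul_comp, hf i h]

/-- For a chain `W₁ ⊆ ⋯ ⊆ W_I ⊆ V = ℂⁿ`, the space `G` of tuples
`(ψᵢ : Wᵢ → V)ᵢ` such that `(ψᵢ - ψ_{i+1} ∘ jᵢ)(Wᵢ) ⊆ W_{i+1}`. -/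
noncomputable def Gspace (n I : ℕ) (W : Fin I → Submodule ℂ (Fin n → ℂ)) (hW : Monotone W) :
    Submodule ℂ (∀ i : Fin I, (↥(W i) →ₗ[ℂ] (Fin n → ℂ))) where
  carrier := {ψ | ∀ (i : Fin I) (h : (i : ℕ) + 1 < I) (x : ↥(W i)),
    ψ i x - ψ ⟨(i : ℕ) + 1, h⟩
        (Submodule.inclusion (hW (Fin.le_def.mpr (Nat.le_succ _))) x) ∈
      W ⟨(i : ℕ) + 1, h⟩}
  add_mem' := by
    intro a b ha hb i h x
    have := Submodule.add_mem _ (ha i h x) (hb i h x)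
    simpa [add_sub_add_comm] using this
  zero_mem' := by
    intro i h x
    simp
  smul_mem' := by
    intro c f hf i h x
    have := Submodule.smul_mem _ c (hf i h x)
    simpa [smul_sub] using this

open Module LinearMap

section General

variable {K M N V : Type*} [Field K] [AddCommGroup M] [Module K M] [AddCommGroup N] [Module K N]
  [AddCommGroup V] [Module K V]

theorem Submodule.finrank_comap_of_surjective [FiniteDimensional K M] {f : M →ₗ[K] N}
    (hf : Function.Surjective f) (p : Submodule K N) :
    finrank K (p.comap f) = finrank K p + finrank K (ker f) := by
  have hrange : range (f.domRestrict (p.comap f)) = p := by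
    rw [range_domRestrict, Submodule.map_comap_eq_of_surjective hf]
  rw [← (f.domRestrict (p.comap f)).finrank_range_add_finrank_ker, hrange, ker_domRestrict,
    (Submodule.comapSubtypeEquivOfLe (ker_le_comap f)).finrank_eq]

theorem Submodule.mkQ_comp_eq_zero_iff (W : Submodule K V) (f : M →ₗ[K] V) :
    W.mkQ ∘ₗ f = 0 ↔ ∀ x, f x ∈ W := by
  rw [← range_le_ker_iff, Submodule.ker_mkQ, range_le_iff_comap, Submodule.eq_top_iff']
  rfl

theorem Submodule.compRight_mkQ_surjective (W : Submodule K V) :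
    Function.Surjective (compRight K W.mkQ : (M →ₗ[K] V) →ₗ[K] M →ₗ[K] V ⧸ W) := by
  obtain ⟨s, hs⟩ := W.mkQ.exists_rightInverse_of_surjective W.range_mkQ
  exact fun φ => ⟨s ∘ₗ φ, by rw [compRight_apply, ← comp_assoc, hs, id_comp]⟩

theorem Submodule.compRight_subtype_injective (W : Submodule K V) :
    Function.Injective (compRight K W.subtype : (M →ₗ[K] W) →ₗ[K] M →ₗ[K] V) :=
  fun _ _ h => LinearMap.ext fun x => Subtype.ext (LinearMap.congr_fun h x)

theorem Submodule.ker_compRight_mkQ (W : Submodule K V) :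
    ker (compRight K W.mkQ : (M →ₗ[K] V) →ₗ[K] M →ₗ[K] V ⧸ W) = range (compRight K W.subtype) := by
  ext f
  rw [mem_ker, compRight_apply, W.mkQ_comp_eq_zero_iff]
  exact ⟨fun h => ⟨f.codRestrict W h, rfl⟩, by rintro ⟨g, rfl⟩ x; exact (g x).2⟩

end General

section Pi

variable {R ι : Type*} [Semiring R] {φ ψ : ι → Type*} [∀ i, AddCommMonoid (φ i)]
  [∀ i, Module R (φ i)] [∀ i, AddCommMonoid (ψ i)] [∀ i, Module R (ψ i)]

theorem LinearMap.ker_piMap (f : ∀ i, φ i →ₗ[R] ψ i) :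
    ker (piMap f) = Submodule.pi Set.univ fun i => ker (f i) := by
  ext x
  simp [funext_iff]

theorem LinearMap.range_piMap (f : ∀ i, φ i →ₗ[R] ψ i) :
    range (piMap f) = Submodule.pi Set.univ fun i => range (f i) := by
  ext x
  simp [Classical.skolem, funext_iff]

end Pi

section Flag

variable {n I : ℕ} (W : Fin I → Submodule ℂ (Fin n → ℂ))

noncomputable def piCompMkQ :
    (∀ i, W i →ₗ[ℂ] (Fin n → ℂ)) →ₗ[ℂ] ∀ i, W i →ₗ[ℂ] (Fin n → ℂ) ⧸ W i :=
  piMap fun i => compRight ℂ (W i).mkQ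

noncomputable def piCompSubtype :
    (∀ i, W i →ₗ[ℂ] W i) →ₗ[ℂ] ∀ i, W i →ₗ[ℂ] (Fin n → ℂ) :=
  piMap fun i => compRight ℂ (W i).subtype

theorem piCompMkQ_apply (ψ : ∀ i, W i →ₗ[ℂ] (Fin n → ℂ)) (i : Fin I) :
    piCompMkQ W ψ i = (W i).mkQ ∘ₗ ψ i :=
  rfl

theorem piCompMkQ_surjective : Function.Surjective (piCompMkQ W) :=
  Function.Surjective.piMap fun i => (W i).compRight_mkQ_surjective

theorem ker_piCompMkQ : ker (piCompMkQ W) = range (piCompSubtype W) := by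
  simp only [piCompMkQ, piCompSubtype, ker_piMap, range_piMap, Submodule.ker_compRight_mkQ]

theorem finrank_ker_piCompMkQ :
    finrank ℂ (ker (piCompMkQ W)) = ∑ i, finrank ℂ (W i) ^ 2 := by
  have hinj : Function.Injective (piCompSubtype W) :=
    Function.Injective.piMap fun i => (W i).compRight_subtype_injective
  -- not found by instance search
  have : ∀ i, Free ℂ (W i →ₗ[ℂ] W i) := fun i => Free.of_divisionRing ℂ (W i →ₗ[ℂ] W i)
  rw [ker_piCompMkQ, finrank_range_of_inj hinj, finrank_pi_fintype]
  simp only [finrank_linearMap, sq]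

theorem Gspace_eq_comap (hW : Monotone W) :
    Gspace n I W hW = (Kspace n I W hW).comap (piCompMkQ W) := by
  ext ψ
  refine forall₂_congr fun i h => ?_
  rw [LinearMap.ext_iff]
  refine forall_congr' fun x => ?_
  simp only [comp_apply, piCompMkQ_apply, Submodule.mkQ_apply, Submodule.mapQ_apply, id_apply]
  exact (Submodule.Quotient.eq _).symm

end Flag

/-- The map `Ψ : G → K`, `(ψᵢ)ᵢ ↦ (pᵢ ∘ ψᵢ)ᵢ`, is a well-defined surjection with kernel
`⨁ᵢ Hom(Wᵢ, Wᵢ)`, so `dim K = dim G - ∑ᵢ (dim Wᵢ)²`. -/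
theorem flag_tangent_resolution
    (n I : ℕ) (W : Fin I → Submodule ℂ (Fin n → ℂ)) (hW : Monotone W) :
    (∀ ψ ∈ Gspace n I W hW,
      (fun i => ((W i).mkQ).comp (ψ i)) ∈ Kspace n I W hW) ∧
    (∀ φ ∈ Kspace n I W hW, ∃ ψ ∈ Gspace n I W hW,
      ∀ i, ((W i).mkQ).comp (ψ i) = φ i) ∧
    (∀ ψ ∈ Gspace n I W hW,
      ((∀ i, ((W i).mkQ).comp (ψ i) = 0) ↔ ∀ i, ∀ x : ↥(W i), ψ i x ∈ W i)) ∧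
    Module.finrank ℂ ↥(Kspace n I W hW) =
      Module.finrank ℂ ↥(Gspace n I W hW) - ∑ i, (Module.finrank ℂ ↥(W i)) ^ 2 := by
  rw [Gspace_eq_comap]
  refine ⟨fun ψ hψ => hψ, fun φ hφ => ?_, fun ψ _ => forall_congr' fun i => ?_, ?_⟩
  · obtain ⟨ψ, rfl⟩ := piCompMkQ_surjective W φ
    exact ⟨ψ, hφ, fun i => rfl⟩
  · exact (W i).mkQ_comp_eq_zero_iff (ψ i)
  · -- the instance arguments of the general lemma cannot be unified without naming `N`
    rw [Submodule.finrank_comap_of_surjective (N := ∀ i, W i →ₗ[ℂ] (Fin n → ℂ) ⧸ W i)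
      (piCompMkQ_surjective W), finrank_ker_piCompMkQ, Nat.add_sub_cancel]
end

section
/- Let $n \ge 1$ and let $y_1, \ldots, y_n$ be indeterminates. For any polynomial $P \in \mathbb{Q}[y_1,\ldots,y_n]$, the expression $\sum_{\sigma \in S_n} \sigma \cdot \left( \frac{P}{\prod_{1 \le j < j' \le n} (y_{j'} - y_j)} \right)$ is a symmetric polynomial in $y_1, \ldots, y_n$ (in particular, the apparent denominators cancel). -/
/-!
An alternating polynomial is killed by the substitution `y_i ↦ y_j`: that substitution does not
see the transposition `(i j)`, which negates the polynomial. Hence it is divisible by every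
`y_j - y_i`; these linear forms are pairwise non-associate irreducibles of a UFD, so their
product, the Vandermonde determinant `Δ`, divides it. The alternating sum
`∑ σ, sign σ • σ P` is alternating, and since `Δ` is alternating too, the quotient is
symmetric.
-/

open MvPolynomial Finset

namespace MvPolynomial

section Divisibility

variable {σ R S : Type*} [CommRing R] [CommRing S] [Algebra R S]

theorem dvd_aeval_sub_aeval {a : S} {g h : σ → S} (hgh : ∀ k, a ∣ g k - h k)
    (p : MvPolynomial σ R) : a ∣ aeval g p - aeval h p := by
  let π := Ideal.Quotient.mkₐ R (Ideal.span {a})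
  have hπ : (fun k => π (g k)) = fun k => π (h k) := by
    ext k
    exact Ideal.Quotient.eq.mpr (Ideal.mem_span_singleton.mpr (hgh k))
  rw [← Ideal.mem_span_singleton, ← Ideal.Quotient.eq, ← Ideal.Quotient.mkₐ_eq_mk R,
    ← AlgHom.comp_apply, ← AlgHom.comp_apply, comp_aeval, comp_aeval, hπ]

theorem X_sub_X_dvd_sub_rename_update [DecidableEq σ] (p : MvPolynomial σ R) (i j : σ) :
    X j - X i ∣ p - rename (Function.update id i j) p := by
  have hX : ∀ k, (X j - X i : MvPolynomial σ R) ∣ X k - (X ∘ Function.update id i j) k := by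
    intro k
    rcases eq_or_ne k i with rfl | hk
    · simp [dvd_sub_comm]
    · simp [hk]
  have h := dvd_aeval_sub_aeval hX p
  rwa [aeval_X_left_apply, ← aeval_rename, aeval_X_left_apply] at h

theorem eq_or_eq_of_X_sub_X_dvd_X_sub_X [Nontrivial R] {i j k l : σ} (hkl : k ≠ l)
    (h : (X j - X i : MvPolynomial σ R) ∣ X l - X k) : l = i ∨ l = j := by
  classical
  by_contra! hl
  have := map_dvd (eval (Pi.single l 1)) h
  simp [hl.1.symm, hl.2.symm, hkl] at this

theorem irreducible_X_sub_X [IsDomain R] {i j : σ} (hij : i ≠ j) :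
    Irreducible (X j - X i : MvPolynomial σ R) := by
  classical
  have hcoeff : coeff (Finsupp.single j 1) (X j - X i : MvPolynomial σ R) = 1 := by
    simp [coeff_X, Finsupp.single_left_inj one_ne_zero, hij]
  refine irreducible_of_totalDegree_eq_one (le_antisymm ?_ ?_) fun x hx => ?_
  · exact (totalDegree_sub _ _).trans (by simp)
  · simpa using le_totalDegree (s := Finsupp.single j 1) (by simp [mem_support_iff, hcoeff])
  · exact isUnit_of_dvd_one (hcoeff ▸ hx _)

end Divisibility

section Alternating

variable {σ R : Type*} [Fintype σ] [DecidableEq σ] [CommRing R]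

def IsAlternating (p : MvPolynomial σ R) : Prop :=
  ∀ e : Equiv.Perm σ, rename e p = (Equiv.Perm.sign e : ℤ) • p

theorem isAlternating_sum_sign_smul_rename (p : MvPolynomial σ R) :
    IsAlternating (∑ e : Equiv.Perm σ, (Equiv.Perm.sign e : ℤ) • rename e p) := by
  intro τ
  rw [map_sum, smul_sum]
  refine Fintype.sum_equiv (Equiv.mulLeft τ) _ _ fun e => ?_
  rw [map_zsmul, rename_rename, Equiv.coe_mulLeft, smul_smul, Equiv.Perm.sign_mul,
    ← Units.val_mul, ← mul_assoc, Int.units_mul_self, one_mul]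
  rfl

theorem IsAlternating.rename_update_eq_zero [IsDomain R] (h2 : (2 : R) ≠ 0)
    {p : MvPolynomial σ R} (hp : IsAlternating p) {i j : σ} (hij : i ≠ j) :
    rename (Function.update id i j) p = 0 := by
  have hswap : Function.update id i j ∘ Equiv.swap i j = Function.update id i j := by
    ext k
    rcases eq_or_ne k i with rfl | hki
    · simp [hij.symm]
    rcases eq_or_ne k j with rfl | hkj
    · simp [hij.symm]
    · simp [Equiv.swap_apply_of_ne_of_ne hki hkj, hki]
  have h := congrArg (rename (Function.update id i j)) (hp (Equiv.swap i j))
  rw [rename_rename, hswap, Equiv.Perm.sign_swap hij, Units.val_neg, Units.val_one, neg_one_smul,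
    map_neg, eq_neg_iff_add_eq_zero, ← two_mul] at h
  refine (mul_eq_zero.mp h).resolve_left ?_
  simpa [← map_ofNat C] using h2

theorem IsAlternating.X_sub_X_dvd [IsDomain R] (h2 : (2 : R) ≠ 0) {p : MvPolynomial σ R}
    (hp : IsAlternating p) {i j : σ} (hij : i ≠ j) : X j - X i ∣ p := by
  simpa [hp.rename_update_eq_zero h2 hij] using X_sub_X_dvd_sub_rename_update p i j

theorem IsAlternating.isSymmetric_of_eq_mul [IsDomain R] {Δ p q : MvPolynomial σ R}
    (hΔ : IsAlternating Δ) (hΔ0 : Δ ≠ 0) (hp : IsAlternating p) (hpq : p = Δ * q) :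
    q.IsSymmetric := by
  intro e
  have h := hp e
  rw [hpq, map_mul, hΔ e, smul_mul_assoc, ← Units.smul_def, ← Units.smul_def,
    smul_left_cancel_iff] at h
  exact mul_left_cancel₀ hΔ0 h

end Alternating

section Ordered

variable {σ R : Type*} [Fintype σ] [LinearOrder σ] [CommRing R]

theorem pairwise_isRelPrime_X_sub_X [IsDomain R] :
    (univ.filter (fun q : σ × σ => q.1 < q.2) : Set (σ × σ)).Pairwise
      (Function.onFun IsRelPrime fun q : σ × σ => (X q.2 - X q.1 : MvPolynomial σ R)) := by
  rintro ⟨i, j⟩ hij ⟨k, l⟩ hkl hne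
  simp only [coe_filter, mem_univ, true_and, Set.mem_ofPred_eq] at hij hkl
  refine (irreducible_X_sub_X hij.ne).isRelPrime_iff_not_dvd.mpr fun h => hne ?_
  have hl := eq_or_eq_of_X_sub_X_dvd_X_sub_X hkl.ne h
  have hk := eq_or_eq_of_X_sub_X_dvd_X_sub_X hkl.ne' (dvd_sub_comm.mp h)
  simp only [Prod.mk.injEq]
  grind

theorem IsAlternating.prod_X_sub_X_dvd [IsDomain R] [UniqueFactorizationMonoid R]
    (h2 : (2 : R) ≠ 0) {p : MvPolynomial σ R} (hp : IsAlternating p) :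
    ∏ q ∈ univ.filter (fun q : σ × σ => q.1 < q.2), (X q.2 - X q.1) ∣ p :=
  prod_dvd_of_isRelPrime pairwise_isRelPrime_X_sub_X fun _ hq =>
    hp.X_sub_X_dvd h2 (mem_filter.mp hq).2.ne

end Ordered

section Vandermonde

variable {R : Type*} [CommRing R]

theorem prod_filter_lt_X_sub_X_eq_det_vandermonde (n : ℕ) :
    ∏ q ∈ univ.filter (fun q : Fin n × Fin n => q.1 < q.2),
        (X q.2 - X q.1 : MvPolynomial (Fin n) R)
      = (Matrix.vandermonde (X : Fin n → MvPolynomial (Fin n) R)).det := by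
  rw [Matrix.det_vandermonde, prod_filter, Fintype.prod_prod_type]
  refine prod_congr rfl fun i _ => ?_
  rw [← prod_filter, filter_lt_eq_Ioi]

theorem isAlternating_det_vandermonde_X (n : ℕ) :
    IsAlternating (Matrix.vandermonde (X : Fin n → MvPolynomial (Fin n) R)).det := by
  intro e
  have h : (rename e : MvPolynomial (Fin n) R →ₐ[R] _).mapMatrix (Matrix.vandermonde X) =
      (Matrix.vandermonde X).submatrix e id := by
    ext i j
    simp [Matrix.vandermonde]
  rw [AlgHom.map_det, h, Matrix.det_permute, zsmul_eq_mul]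

end Vandermonde

end MvPolynomial

/-- The Brion/localization push-forward formula (full flag case): for any polynomial `P` in
`y₁, …, y_n`, the symmetrization `∑_{σ ∈ Sₙ} σ · (P / ∏_{j<j'} (y_{j'} - y_j))` is a
symmetric polynomial; equivalently, the Vandermonde determinant `Δ = ∏_{j<j'} (y_{j'} - y_j)`
divides the alternating sum `∑_σ sign(σ) · σP`, with symmetric quotient. -/
theorem symmetrized_vandermonde_quotient_is_symmetric_polynomial
    (n : ℕ) (P : MvPolynomial (Fin n) ℚ) :
    ∃ Q : MvPolynomial (Fin n) ℚ, Q.IsSymmetric ∧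
      (∑ σ : Equiv.Perm (Fin n), (Equiv.Perm.sign σ : ℤ) • rename (⇑σ) P) =
        (∏ p ∈ Finset.univ.filter (fun p : Fin n × Fin n => p.1 < p.2),
          (X p.2 - X p.1)) * Q := by
  have hA := isAlternating_sum_sign_smul_rename P
  obtain ⟨Q, hQ⟩ := hA.prod_X_sub_X_dvd two_ne_zero
  refine ⟨Q, ?_, hQ⟩
  rw [prod_filter_lt_X_sub_X_eq_det_vandermonde] at hQ
  exact (isAlternating_det_vandermonde_X n).isSymmetric_of_eq_mul
    (Matrix.det_vandermonde_ne_zero_iff.mpr X_injective) hA hQ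
end
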